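/- Let p, γ, q, η : ℝ × ℝ → GL_n(ℝ) be smooth maps and let B be an Ad-invariant bilinear form on n×n real matrices. Define E(g,h) := B(Θ(g), φ̂(h)) and ρ̃(g,h) := B(Θ(g), Ad_h(φ(g)) − φ(g) − φ̂(h)) + B(Θ(h), φ(g)). Then at every point of ℝ × ℝ one has −ρ̃(q⁻¹, γ) + E(q⁻¹γq, η) + E(pq, (q⁻¹γq)·η) − E(q, η) − E(p, γ) = E(pγ, qη) − E(p, q), where all products, inverses and conjugates of maps are pointwise. (This is the pointwise integrand identity underlying the paper's Lemma that δ_v α = M*(pr₁*∇ − mult*∇ + pr₂*∇) = M*δ_h∇ for the rigid connective structure on the Chern–Simons bundle 2-gerbe; ρ̃, E are the integrands of the forms ρ, ε, ν, α of the paper.) -/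

import Mathlib

attribute [local instance] Matrix.normedAddCommGroup Matrix.normedSpace

/-- Partial derivative in the first (`s`) variable of a matrix-valued map on `ℝ × ℝ`. -/
noncomputable def pdS {n : ℕ} (g : ℝ × ℝ → Matrix (Fin n) (Fin n) ℝ) (x : ℝ × ℝ) :
    Matrix (Fin n) (Fin n) ℝ := fderiv ℝ g x (1, 0)

/-- Partial derivative in the second (`θ`) variable of a matrix-valued map on `ℝ × ℝ`. -/
noncomputable def pdθ {n : ℕ} (g : ℝ × ℝ → Matrix (Fin n) (Fin n) ℝ) (x : ℝ × ℝ) :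
    Matrix (Fin n) (Fin n) ℝ := fderiv ℝ g x (0, 1)

/-- `Θ(g) = g⁻¹ · ∂ₛ g`, the left Maurer–Cartan form evaluated on the variation. -/
noncomputable def Th {n : ℕ} (g : ℝ × ℝ → Matrix (Fin n) (Fin n) ℝ) (x : ℝ × ℝ) :
    Matrix (Fin n) (Fin n) ℝ := (g x)⁻¹ * pdS g x

/-- `Θ̂(g) = (∂ₛ g) · g⁻¹`, the right Maurer–Cartan form evaluated on the variation. -/
noncomputable def ThHat {n : ℕ} (g : ℝ × ℝ → Matrix (Fin n) (Fin n) ℝ) (x : ℝ × ℝ) :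
    Matrix (Fin n) (Fin n) ℝ := pdS g x * (g x)⁻¹

/-- `φ(g) = g⁻¹ · ∂_θ g`, the Higgs field. -/
noncomputable def phiL {n : ℕ} (g : ℝ × ℝ → Matrix (Fin n) (Fin n) ℝ) (x : ℝ × ℝ) :
    Matrix (Fin n) (Fin n) ℝ := (g x)⁻¹ * pdθ g x

/-- `φ̂(g) = (∂_θ g) · g⁻¹`, the conjugated Higgs field. -/
noncomputable def phiHat {n : ℕ} (g : ℝ × ℝ → Matrix (Fin n) (Fin n) ℝ) (x : ℝ × ℝ) :
    Matrix (Fin n) (Fin n) ℝ := pdθ g x * (g x)⁻¹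

/-- `Ad_g(X) = g · X · g⁻¹`. -/
noncomputable def AdM {n : ℕ} (g X : Matrix (Fin n) (Fin n) ℝ) :
    Matrix (Fin n) (Fin n) ℝ := g * X * g⁻¹

/-- A bilinear form on `n × n` matrices is `Ad`-invariant if it is preserved by
conjugation by any invertible matrix. -/
def AdInvariant {n : ℕ}
    (B : Matrix (Fin n) (Fin n) ℝ →ₗ[ℝ] Matrix (Fin n) (Fin n) ℝ →ₗ[ℝ] ℝ) : Prop :=
  ∀ g : Matrix (Fin n) (Fin n) ℝ, IsUnit g →
    ∀ X Y : Matrix (Fin n) (Fin n) ℝ, B (g * X * g⁻¹) (g * Y * g⁻¹) = B X Y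

/-- `E(g,h) := B(Θ(g), φ̂(h))`, the common integrand of the forms `ε`, `ν`, `α` of the paper. -/
noncomputable def Efun {n : ℕ}
    (B : Matrix (Fin n) (Fin n) ℝ →ₗ[ℝ] Matrix (Fin n) (Fin n) ℝ →ₗ[ℝ] ℝ)
    (g h : ℝ × ℝ → Matrix (Fin n) (Fin n) ℝ) (x : ℝ × ℝ) : ℝ :=
  B (Th g x) (phiHat h x)

/-- `ρ̃(g,h) := B(Θ(g), Ad_h(φ(g)) − φ(g) − φ̂(h)) + B(Θ(h), φ(g))`, the integrand of the
form `ρ` of the paper. -/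
noncomputable def rhoFun {n : ℕ}
    (B : Matrix (Fin n) (Fin n) ℝ →ₗ[ℝ] Matrix (Fin n) (Fin n) ℝ →ₗ[ℝ] ℝ)
    (g h : ℝ × ℝ → Matrix (Fin n) (Fin n) ℝ) (x : ℝ × ℝ) : ℝ :=
  B (Th g x) (AdM (h x) (phiL g x) - phiL g x - phiHat h x) + B (Th h x) (phiL g x)


noncomputable def entryCLM (i j : Fin n) : Matrix (Fin n) (Fin n) ℝ →L[ℝ] ℝ :=
  LinearMap.toContinuousLinearMap
  { toFun := fun A => A i j
    map_add' := fun _ _ => rfl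
    map_smul' := fun _ _ => rfl }

noncomputable def mulCLM : Matrix (Fin n) (Fin n) ℝ →L[ℝ] Matrix (Fin n) (Fin n) ℝ →L[ℝ] Matrix (Fin n) (Fin n) ℝ :=
  LinearMap.toContinuousLinearMap
  { toFun := fun A => LinearMap.toContinuousLinearMap
      { toFun := fun B => A * B
        map_add' := fun _ _ => by simp [Matrix.mul_add]
        map_smul' := fun _ _ => by simp [Matrix.mul_smul] }
    map_add' := fun _ _ => by ext; simp [Matrix.add_mul]
    map_smul' := fun _ _ => by ext; simp [Matrix.smul_mul] }

theorem diff_entry {f : ℝ×ℝ → Matrix (Fin n) (Fin n) ℝ} {x : ℝ×ℝ} (hf : DifferentiableAt ℝ f x) (i j : Fin n) :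
    DifferentiableAt ℝ (fun y => f y i j) x :=
  ((entryCLM i j).differentiableAt).comp x hf

theorem diff_mul {f g : ℝ×ℝ → Matrix (Fin n) (Fin n) ℝ} {x : ℝ×ℝ}
    (hf : DifferentiableAt ℝ f x) (hg : DifferentiableAt ℝ g x) :
    DifferentiableAt ℝ (fun y => f y * g y) x := by
  have h := ((mulCLM (n := n)).isBoundedBilinearMap.hasFDerivAt (f x, g x)).comp x
    (HasFDerivAt.prodMk (hf.hasFDerivAt) (hg.hasFDerivAt))
  exact h.differentiableAt

theorem fd_mul {f g : ℝ×ℝ → Matrix (Fin n) (Fin n) ℝ} {x : ℝ×ℝ}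
    (hf : DifferentiableAt ℝ f x) (hg : DifferentiableAt ℝ g x) (v : ℝ × ℝ) :
    fderiv ℝ (fun y => f y * g y) x v = fderiv ℝ f x v * g x + f x * fderiv ℝ g x v := by
  have h := ((mulCLM (n := n)).isBoundedBilinearMap.hasFDerivAt (f x, g x)).comp x
    (HasFDerivAt.prodMk (hf.hasFDerivAt) (hg.hasFDerivAt))
  have h2 : (fun y => f y * g y)
      = ((fun p : Matrix (Fin n) (Fin n) ℝ × Matrix (Fin n) (Fin n) ℝ => mulCLM p.1 p.2)
          ∘ fun y => (f y, g y)) := rfl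
  rw [h2]; erw [h.fderiv]
  exact add_comm (f x * fderiv ℝ g x v) (fderiv ℝ f x v * g x)

theorem diff_det {f : ℝ×ℝ → Matrix (Fin n) (Fin n) ℝ} {x : ℝ×ℝ}
    (hf : ∀ i j, DifferentiableAt ℝ (fun y => f y i j) x) :
    DifferentiableAt ℝ (fun y => (f y).det) x := by
  have h : (fun y => (f y).det)
      = fun y => ∑ σ : Equiv.Perm (Fin n), (Equiv.Perm.sign σ : ℝ) * ∏ i, f y (σ i) i := by
    funext y; rw [Matrix.det_apply']
  rw [h]
  refine DifferentiableAt.fun_sum fun σ _ => (differentiableAt_const _).fun_mul ?_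
  exact (HasFDerivAt.finset_prod (u := Finset.univ)
    (fun i _ => (hf (σ i) i).hasFDerivAt)).differentiableAt

theorem diff_adjugate {f : ℝ×ℝ → Matrix (Fin n) (Fin n) ℝ} {x : ℝ×ℝ} (hf : DifferentiableAt ℝ f x) :
    DifferentiableAt ℝ (fun y => (f y).adjugate) x := by
  refine differentiableAt_pi.2 fun i => differentiableAt_pi.2 fun j => ?_
  have h : (fun y => (f y).adjugate i j)
      = fun y => ((f y).updateRow j (Pi.single i 1)).det := by
    funext y; rw [Matrix.adjugate_apply]
  rw [h]
  refine diff_det fun i' k => ?_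
  have h2 : (fun y => (f y).updateRow j (Pi.single i 1) i' k)
      = fun y => if i' = j then (Pi.single i 1 : Fin n → ℝ) k else f y i' k := by
    funext y; rw [Matrix.updateRow_apply]
  rw [h2]
  by_cases hij : i' = j
  · simp only [if_pos hij]; exact differentiableAt_const _
  · simp only [if_neg hij]; exact diff_entry hf i' k

theorem diff_inv {f : ℝ×ℝ → Matrix (Fin n) (Fin n) ℝ} {x : ℝ×ℝ} (hf : DifferentiableAt ℝ f x)
    (hu : IsUnit (f x)) : DifferentiableAt ℝ (fun y => (f y)⁻¹) x := by
  have h : (fun y => (f y)⁻¹) = fun y => ((f y).det)⁻¹ • (f y).adjugate := by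
    funext y; rw [Matrix.inv_def, Ring.inverse_eq_inv']
  rw [h]
  have hdet : (f x).det ≠ 0 := ((Matrix.isUnit_iff_isUnit_det _).1 hu).ne_zero
  exact ((diff_det fun i j => diff_entry hf i j).inv hdet).smul (diff_adjugate hf)

theorem fd_inv {f : ℝ×ℝ → Matrix (Fin n) (Fin n) ℝ} {x : ℝ×ℝ} (hf : DifferentiableAt ℝ f x)
    (hu : ∀ y, IsUnit (f y)) (v : ℝ × ℝ) :
    fderiv ℝ (fun y => (f y)⁻¹) x v = -((f x)⁻¹ * (fderiv ℝ f x v * (f x)⁻¹)) := by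
  have hdet : IsUnit (f x).det := (Matrix.isUnit_iff_isUnit_det _).1 (hu x)
  have hdi := diff_inv hf (hu x)
  have hone : (fun y => f y * (f y)⁻¹) = fun _ => (1 : Matrix (Fin n) (Fin n) ℝ) := by
    funext y; exact Matrix.mul_nonsing_inv _ ((Matrix.isUnit_iff_isUnit_det _).1 (hu y))
  have h0 : fderiv ℝ f x v * (f x)⁻¹ + f x * fderiv ℝ (fun y => (f y)⁻¹) x v = 0 := by
    rw [← fd_mul hf hdi v, hone]
    simp
  calc fderiv ℝ (fun y => (f y)⁻¹) x v
      = (f x)⁻¹ * (f x * fderiv ℝ (fun y => (f y)⁻¹) x v) := by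
        rw [← Matrix.mul_assoc, Matrix.nonsing_inv_mul _ hdet, Matrix.one_mul]
    _ = (f x)⁻¹ * (-(fderiv ℝ f x v * (f x)⁻¹)) := by
        rw [eq_neg_of_add_eq_zero_right h0]
    _ = -((f x)⁻¹ * (fderiv ℝ f x v * (f x)⁻¹)) := by rw [Matrix.mul_neg]

section Helpers
variable {n : ℕ} {f g : ℝ × ℝ → Matrix (Fin n) (Fin n) ℝ} {x : ℝ × ℝ}

theorem pdS_mul (hf : DifferentiableAt ℝ f x) (hg : DifferentiableAt ℝ g x) :
    pdS (fun y => f y * g y) x = pdS f x * g x + f x * pdS g x := fd_mul hf hg (1,0)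

theorem pdθ_mul (hf : DifferentiableAt ℝ f x) (hg : DifferentiableAt ℝ g x) :
    pdθ (fun y => f y * g y) x = pdθ f x * g x + f x * pdθ g x := fd_mul hf hg (0,1)

theorem pdS_inv (hf : DifferentiableAt ℝ f x) (hu : ∀ y, IsUnit (f y)) :
    pdS (fun y => (f y)⁻¹) x = -((f x)⁻¹ * (pdS f x * (f x)⁻¹)) := fd_inv hf hu (1,0)

theorem pdθ_inv (hf : DifferentiableAt ℝ f x) (hu : ∀ y, IsUnit (f y)) :
    pdθ (fun y => (f y)⁻¹) x = -((f x)⁻¹ * (pdθ f x * (f x)⁻¹)) := fd_inv hf hu (0,1)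

end Helpers


/-- The pointwise integrand identity underlying
`δ_v α = M*(pr₁*∇ − mult*∇ + pr₂*∇) = M*δ_h∇` for the rigid connective structure on the
Chern–Simons bundle 2-gerbe:
`−ρ̃(q⁻¹, γ) + E(q⁻¹γq, η) + E(pq, (q⁻¹γq)·η) − E(q, η) − E(p, γ) = E(pγ, qη) − E(p, q)`. -/
theorem delta_v_alpha_eq_M_delta_h_nabla_integrand
    {n : ℕ} (hn : 1 ≤ n)
    (B : Matrix (Fin n) (Fin n) ℝ →ₗ[ℝ] Matrix (Fin n) (Fin n) ℝ →ₗ[ℝ] ℝ)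
    (hB : AdInvariant B)
    (p γ q η : ℝ × ℝ → Matrix (Fin n) (Fin n) ℝ)
    (hp : ContDiff ℝ (⊤ : ℕ∞) p) (hγ : ContDiff ℝ (⊤ : ℕ∞) γ)
    (hq : ContDiff ℝ (⊤ : ℕ∞) q) (hη : ContDiff ℝ (⊤ : ℕ∞) η)
    (hpU : ∀ x, IsUnit (p x)) (hγU : ∀ x, IsUnit (γ x))
    (hqU : ∀ x, IsUnit (q x)) (hηU : ∀ x, IsUnit (η x)) :
    ∀ x : ℝ × ℝ,
      - rhoFun B (fun y => (q y)⁻¹) γ x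
        + Efun B (fun y => (q y)⁻¹ * γ y * q y) η x
        + Efun B (fun y => p y * q y) (fun y => ((q y)⁻¹ * γ y * q y) * η y) x
        - Efun B q η x
        - Efun B p γ x
      = Efun B (fun y => p y * γ y) (fun y => q y * η y) x - Efun B p q x := by
  intro x
  have hpd : DifferentiableAt ℝ p x := (hp.differentiable (by simp)).differentiableAt
  have hγd : DifferentiableAt ℝ γ x := (hγ.differentiable (by simp)).differentiableAt
  have hqd : DifferentiableAt ℝ q x := (hq.differentiable (by simp)).differentiableAt
  have hηd : DifferentiableAt ℝ η x := (hη.differentiable (by simp)).differentiableAt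
  have hqid : DifferentiableAt ℝ (fun y => (q y)⁻¹) x := diff_inv hqd (hqU x)
  have hqiγ : DifferentiableAt ℝ (fun y => (q y)⁻¹ * γ y) x := diff_mul hqid hγd
  have hqiγq : DifferentiableAt ℝ (fun y => (q y)⁻¹ * γ y * q y) x := diff_mul hqiγ hqd
  have hdq : IsUnit (q x).det := (Matrix.isUnit_iff_isUnit_det _).1 (hqU x)
  have hdp : IsUnit (p x).det := (Matrix.isUnit_iff_isUnit_det _).1 (hpU x)
  have hdγ : IsUnit (γ x).det := (Matrix.isUnit_iff_isUnit_det _).1 (hγU x)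
  have hdη : IsUnit (η x).det := (Matrix.isUnit_iff_isUnit_det _).1 (hηU x)
  simp only [Efun, rhoFun, Th, phiHat, phiL, AdM]
  rw [pdS_mul hqiγ hqd, pdS_mul hqid hγd,
      pdθ_mul hqiγq hηd, pdθ_mul hqiγ hqd, pdθ_mul hqid hγd,
      pdS_mul hpd hqd, pdS_mul hpd hγd, pdθ_mul hqd hηd,
      pdS_inv hqd hqU, pdθ_inv hqd hqU]
  simp only [Matrix.mul_inv_rev, Matrix.nonsing_inv_nonsing_inv _ hdq]
  set a := p x with ha
  set b := γ x with hb
  set c := q x with hc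
  set d := η x with hd
  set aS := pdS p x
  set bS := pdS γ x
  set cS := pdS q x
  set dS := pdS η x
  set aT := pdθ p x
  set bT := pdθ γ x
  set cT := pdθ q x
  set dT := pdθ η x
  have c1 : ∀ X : Matrix (Fin n) (Fin n) ℝ, c * (c⁻¹ * X) = X :=
    fun X => Matrix.mul_nonsing_inv_cancel_left _ _ hdq
  have c2 : ∀ X : Matrix (Fin n) (Fin n) ℝ, c⁻¹ * (c * X) = X :=
    fun X => Matrix.nonsing_inv_mul_cancel_left _ _ hdq
  have b1 : ∀ X : Matrix (Fin n) (Fin n) ℝ, b * (b⁻¹ * X) = X :=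
    fun X => Matrix.mul_nonsing_inv_cancel_left _ _ hdγ
  have b2 : ∀ X : Matrix (Fin n) (Fin n) ℝ, b⁻¹ * (b * X) = X :=
    fun X => Matrix.nonsing_inv_mul_cancel_left _ _ hdγ
  have d1 : ∀ X : Matrix (Fin n) (Fin n) ℝ, d * (d⁻¹ * X) = X :=
    fun X => Matrix.mul_nonsing_inv_cancel_left _ _ hdη
  have d2 : ∀ X : Matrix (Fin n) (Fin n) ℝ, d⁻¹ * (d * X) = X :=
    fun X => Matrix.nonsing_inv_mul_cancel_left _ _ hdη
  have a1 : ∀ X : Matrix (Fin n) (Fin n) ℝ, a * (a⁻¹ * X) = X :=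
    fun X => Matrix.mul_nonsing_inv_cancel_left _ _ hdp
  have a2 : ∀ X : Matrix (Fin n) (Fin n) ℝ, a⁻¹ * (a * X) = X :=
    fun X => Matrix.nonsing_inv_mul_cancel_left _ _ hdp
  have cc : c * c⁻¹ = 1 := Matrix.mul_nonsing_inv _ hdq
  have cc' : c⁻¹ * c = 1 := Matrix.nonsing_inv_mul _ hdq
  have dd : d * d⁻¹ = 1 := Matrix.mul_nonsing_inv _ hdη
  have dd' : d⁻¹ * d = 1 := Matrix.nonsing_inv_mul _ hdη
  have bb : b * b⁻¹ = 1 := Matrix.mul_nonsing_inv _ hdγ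
  have bb' : b⁻¹ * b = 1 := Matrix.nonsing_inv_mul _ hdγ
  simp only [Matrix.mul_add, Matrix.add_mul, Matrix.sub_mul, Matrix.mul_sub,
    Matrix.mul_neg, Matrix.neg_mul, Matrix.mul_assoc, c1, c2, b1, b2, d1, d2, a1, a2,
    cc, cc', dd, dd', bb, bb', Matrix.mul_one, Matrix.one_mul,
    map_add, map_sub, map_neg, LinearMap.add_apply, LinearMap.sub_apply, LinearMap.neg_apply,
    neg_neg, neg_sub, sub_neg_eq_add]
  have aa : a * a⁻¹ = 1 := Matrix.mul_nonsing_inv _ hdp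
  have aa' : a⁻¹ * a = 1 := Matrix.nonsing_inv_mul _ hdp
  have hub : IsUnit b := hγU x
  have huc : IsUnit c := hqU x
  have eB := hB c huc (c⁻¹ * cS) (c⁻¹ * cT)
  have eC := hB c huc (c⁻¹ * (b⁻¹ * (cS * (c⁻¹ * (b * c))))) (dT * d⁻¹)
  have eD := hB c huc (c⁻¹ * (b⁻¹ * (bS * c))) (dT * d⁻¹)
  have eE := hB c huc (c⁻¹ * (a⁻¹ * (aS * c))) (c⁻¹ * cT)
  have eF := hB c huc (c⁻¹ * (a⁻¹ * (aS * c))) (c⁻¹ * (bT * (b⁻¹ * c)))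
  have eG := hB c huc (c⁻¹ * cS) (c⁻¹ * (bT * (b⁻¹ * c)))
  have eH1 := hB c huc (c⁻¹ * (a⁻¹ * (aS * c))) (c⁻¹ * (b * (cT * (c⁻¹ * (b⁻¹ * c)))))
  have eH2 := hB b hub (b⁻¹ * (a⁻¹ * (aS * b))) (cT * c⁻¹)
  have eI := hB c huc (c⁻¹ * cS) (c⁻¹ * (b * (cT * (c⁻¹ * (b⁻¹ * c)))))
  have eJ1 := hB c huc (c⁻¹ * (a⁻¹ * (aS * c))) (c⁻¹ * (b * (c * (dT * (d⁻¹ * (c⁻¹ * (b⁻¹ * c)))))))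
  have eJ2 := hB b hub (b⁻¹ * (a⁻¹ * (aS * b))) (c * (dT * (d⁻¹ * c⁻¹)))
  have eK1 := hB c huc (c⁻¹ * cS) (c⁻¹ * (b * (c * (dT * (d⁻¹ * (c⁻¹ * (b⁻¹ * c)))))))
  have eK2 := hB b hub (b⁻¹ * (cS * (c⁻¹ * b))) (c * (dT * (d⁻¹ * c⁻¹)))
  simp only [Matrix.mul_assoc, c1, c2, b1, b2, d1, d2, a1, a2, cc, cc', dd, dd', bb, bb',
    aa, aa', Matrix.mul_one, Matrix.one_mul]
    at eB eC eD eE eF eG eH1 eH2 eI eJ1 eJ2 eK1 eK2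
  linarith [eB, eC, eD, eE, eF, eG, eH1, eH2, eI, eJ1, eJ2, eK1, eK2]
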